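/- For each s > −1, the set {H(ϑ; s) : ϑ ∈ 𝒮} coincides with the set of limit points of the sequence (H(η(N); s))_{N≥1}. Likewise, {K(ϑ) : ϑ ∈ 𝒮} and {R(ϑ) : ϑ ∈ 𝒮} coincide with the sets of limit points of the sequences (K(η(N)))_{N≥1} and (R(η(N)))_{N≥1}, respectively. -/

import Mathlib

/-!
Since the binary exponents of `N` are strictly decreasing, `η(N)` is a halving sequence:
`η_{k+1} ≤ η_k / 2`, hence `η_k ≤ 2⁻ᵏ` and `∑_{j>k} η_j ≤ η_k`. These bounds give geometric
majorants for every series in `H`, `K` and `R`, so by dominated convergence the three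
functionals are continuous on halving sequences for coordinatewise convergence. All `η(N)` lie
in the compact cube `[0,1]^ℕ`, so along any subsequence some further subsequence of `η(N)`
converges coordinatewise, to an element of `𝒮`; continuity then matches limit points of the
values with values on `𝒮`.
-/

open Filter Topology

noncomputable section

namespace GreedyEnergy

/-- Decreasing list `n₁ > n₂ > ⋯ > n_p` of the binary exponents of `N`,
so that `N = 2^{n₁} + ⋯ + 2^{n_p}` with `n₁ > n₂ > ⋯ > n_p ≥ 0`. -/
def binExps (N : ℕ) : List ℕ :=
  ((List.range (N + 1)).filter fun i => N.testBit i).reverse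

/-- The number `p = τ_b(N)` of ones in the binary expansion of `N`. -/
def pbin (N : ℕ) : ℕ := (binExps N).length

/-- `η(N)` viewed as an infinite sequence (0-indexed): the entry of index `k`
is `θ_{k+1} = 2^{n_{k+1}}/N` for `k < p`, and `0` for `k ≥ p`. -/
def eta (N : ℕ) : ℕ → ℝ :=
  fun k => ((binExps N).map fun n => (2 : ℝ) ^ n / (N : ℝ)).getD k 0

/-- `H(θ; s)` for a finite vector of length `p` given (0-indexed) by `θ : ℕ → ℝ`:
`H(θ;s) = Σ_{k=1}^p θ_k^{s+1} + 2(2^s − 1) Σ_{k=1}^{p−1} θ_k^s Σ_{j=k+1}^p θ_j`. -/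
def Hvec (θ : ℕ → ℝ) (p : ℕ) (s : ℝ) : ℝ :=
  (∑ k ∈ Finset.range p, θ k ^ (s + 1)) +
    2 * ((2 : ℝ) ^ s - 1) *
      ∑ k ∈ Finset.range p, θ k ^ s * ∑ j ∈ Finset.Ico (k + 1) p, θ j

/-- `K(θ) = 2 log 2 + Σ_{k=1}^p θ_k² log(θ_k/4) + 2 Σ_{k=1}^{p−1} (Σ_{j=k+1}^p θ_j) θ_k log θ_k`. -/
def Kvec (θ : ℕ → ℝ) (p : ℕ) : ℝ :=
  2 * Real.log 2 + (∑ k ∈ Finset.range p, θ k ^ 2 * Real.log (θ k / 4)) +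
    2 * ∑ k ∈ Finset.range p, (∑ j ∈ Finset.Ico (k + 1) p, θ j) * (θ k * Real.log (θ k))

/-- `R(θ) = −(2 log 2) Σ_{k=1}^p (k−1) θ_k − Σ_{k=1}^p θ_k log θ_k` (0-indexed: `k−1 ↦ k`). -/
def Rvec (θ : ℕ → ℝ) (p : ℕ) : ℝ :=
  -(2 * Real.log 2) * (∑ k ∈ Finset.range p, (k : ℝ) * θ k) -
    ∑ k ∈ Finset.range p, θ k * Real.log (θ k)

/-- `G(θ; s) = Σ_{k=1}^p θ_k^s`. -/
def Gvec (θ : ℕ → ℝ) (p : ℕ) (s : ℝ) : ℝ := ∑ k ∈ Finset.range p, θ k ^ s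

/-- `Λ(θ) = Σ_{k=1}^p θ_k log θ_k`. -/
def Λvec (θ : ℕ → ℝ) (p : ℕ) : ℝ := ∑ k ∈ Finset.range p, θ k * Real.log (θ k)

/-- `H(η(N); s)`. -/
def Heta (N : ℕ) (s : ℝ) : ℝ := Hvec (eta N) (pbin N) s

/-- `K(η(N))`. -/
def Keta (N : ℕ) : ℝ := Kvec (eta N) (pbin N)

/-- `R(η(N))`. -/
def Reta (N : ℕ) : ℝ := Rvec (eta N) (pbin N)

/-- `G(η(N); s)`. -/
def Geta (N : ℕ) (s : ℝ) : ℝ := Gvec (eta N) (pbin N) s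

/-- `Λ(η(N))`. -/
def Λeta (N : ℕ) : ℝ := Λvec (eta N) (pbin N)

/-- The set `𝒮` of infinite sequences `ϑ` for which there is a strictly increasing
sequence of positive integers `N_m` with `ϑ_j = lim_m (η(N_m))_j` for every `j`. -/
def Sset : Set (ℕ → ℝ) :=
  {ϑ | ∃ Nm : ℕ → ℕ, StrictMono Nm ∧ (∀ m, 1 ≤ Nm m) ∧
        ∀ j, Tendsto (fun m => eta (Nm m) j) atTop (𝓝 (ϑ j))}

/-- `H(ϑ; s)` for an infinite sequence `ϑ` (0-indexed). The conventions
`ϑ_n log ϑ_n = 0` and `ϑ_n^s ϑ_j = 0` when `ϑ_n = 0` hold automatically,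
since `Real.log 0 = 0` and `(0:ℝ) ^ s = 0` for `s ≠ 0` (and the factor
`2^s − 1` vanishes when `s = 0`). -/
def Hinf (ϑ : ℕ → ℝ) (s : ℝ) : ℝ :=
  (∑' n : ℕ, ϑ n ^ (s + 1)) +
    2 * ((2 : ℝ) ^ s - 1) * ∑' n : ℕ, ϑ n ^ s * ∑' j : ℕ, ϑ (n + 1 + j)

/-- `K(ϑ)` for an infinite sequence `ϑ`. -/
def Kinf (ϑ : ℕ → ℝ) : ℝ :=
  2 * Real.log 2 + (∑' n : ℕ, ϑ n ^ 2 * Real.log (ϑ n / 4)) +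
    2 * ∑' n : ℕ, (∑' j : ℕ, ϑ (n + 1 + j)) * (ϑ n * Real.log (ϑ n))

/-- `R(ϑ)` for an infinite sequence `ϑ` (0-indexed: `n−1 ↦ n`). -/
def Rinf (ϑ : ℕ → ℝ) : ℝ :=
  -(2 * Real.log 2) * (∑' n : ℕ, (n : ℝ) * ϑ n) - ∑' n : ℕ, ϑ n * Real.log (ϑ n)

/-- The set of limit points of a real sequence: values of convergent subsequences. -/
def limitPoints (x : ℕ → ℝ) : Set ℝ :=
  {L | ∃ φ : ℕ → ℕ, StrictMono φ ∧ Tendsto (fun m => x (φ m)) atTop (𝓝 L)}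

/-- The Riesz `s`-kernel: `k_s(z,w) = |z−w|^{−s}` for `s ≠ 0`, `k_0(z,w) = −log|z−w|`. -/
def kernel (s : ℝ) (z w : ℂ) : ℝ :=
  if s = 0 then -Real.log (‖z - w‖) else ‖z - w‖ ^ (-s)

/-- The Riesz `s`-energy `E_s(a_0, …, a_{N−1}) = Σ_{i ≠ j} k_s(a_i, a_j)`. -/
def energy (s : ℝ) (a : ℕ → ℂ) (N : ℕ) : ℝ :=
  ∑ i ∈ Finset.range N, ∑ j ∈ Finset.range N,
    if i ≠ j then kernel s (a i) (a j) else 0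

/-- The potential `U_{N,s}(z) = Σ_{ℓ=0}^{N−1} k_s(z, a_ℓ)`. -/
def pot (s : ℝ) (a : ℕ → ℂ) (N : ℕ) (z : ℂ) : ℝ :=
  ∑ l ∈ Finset.range N, kernel s z (a l)

/-- A greedy `s`-energy sequence on the unit circle: all points lie on `S¹`, and for
every `N ≥ 1` the point `a_N` minimizes (if `s ≥ 0`) resp. maximizes (if `s < 0`)
the potential `U_{N,s}` over `S¹`. -/
def IsGreedy (s : ℝ) (a : ℕ → ℂ) : Prop :=
  (∀ n, ‖a n‖ = 1) ∧
    ∀ N, 1 ≤ N →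
      ((0 ≤ s → ∀ z : ℂ, ‖z‖ = 1 → pot s a N (a N) ≤ pot s a N z) ∧
        (s < 0 → ∀ z : ℂ, ‖z‖ = 1 → pot s a N z ≤ pot s a N (a N)))

/-- `I_s(σ) = 2^{−s} Γ((1−s)/2) / (√π Γ(1 − s/2))`. -/
def Isigma (s : ℝ) : ℝ :=
  (2 : ℝ) ^ (-s) / Real.sqrt Real.pi * (Real.Gamma ((1 - s) / 2) / Real.Gamma (1 - s / 2))

/-- The value `ζ(s)` of the Riemann zeta function at a real `s` (real part of the
analytically continued zeta function). -/
def zetaR (s : ℝ) : ℝ := (riemannZeta (s : ℂ)).re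

lemma testBit_of_mem_binExps {N n : ℕ} (h : n ∈ binExps N) : N.testBit n := by
  simp only [binExps, List.mem_reverse, List.mem_filter] at h
  exact h.2

lemma binExps_pairwise_gt (N : ℕ) : (binExps N).Pairwise (· > ·) := by
  rw [binExps, List.pairwise_reverse]
  exact List.pairwise_lt_range.sublist List.filter_sublist

lemma eta_of_lt {N k : ℕ} (hk : k < pbin N) :
    eta N k = 2 ^ (binExps N)[k]'hk / (N : ℝ) := by
  rw [eta, List.getD_eq_getElem _ _ (by simpa [pbin] using hk), List.getElem_map]
  rfl

lemma eta_of_le {N k : ℕ} (hk : pbin N ≤ k) : eta N k = 0 := by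
  rw [eta, List.getD_eq_default]
  simpa [pbin] using hk

lemma eta_le_one_of_lt {N k : ℕ} (hk : k < pbin N) : eta N k ≤ 1 := by
  have hN : (2 : ℝ) ^ (binExps N)[k] ≤ N := by
    exact_mod_cast Nat.ge_two_pow_of_testBit (testBit_of_mem_binExps (List.getElem_mem hk))
  rw [eta_of_lt hk]
  exact div_le_one_of_le₀ hN (Nat.cast_nonneg N)

lemma eta_nonneg (N k : ℕ) : 0 ≤ eta N k := by
  rcases lt_or_ge k (pbin N) with hk | hk
  · rw [eta_of_lt hk]; positivity
  · rw [eta_of_le hk]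

structure IsHalving (θ : ℕ → ℝ) : Prop where
  zero_le_one : θ 0 ≤ 1
  nonneg : ∀ k, 0 ≤ θ k
  two_mul_succ_le : ∀ k, 2 * θ (k + 1) ≤ θ k

lemma isHalving_eta (N : ℕ) : IsHalving (eta N) where
  zero_le_one := by
    rcases lt_or_ge 0 (pbin N) with h | h
    · exact eta_le_one_of_lt h
    · rw [eta_of_le h]; exact zero_le_one
  nonneg := eta_nonneg N
  two_mul_succ_le k := by
    rcases lt_or_ge (k + 1) (pbin N) with h | h
    · have h' : k + 1 < (binExps N).length := h
      have hlt : (binExps N)[k + 1] < (binExps N)[k] :=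
        List.pairwise_iff_getElem.1 (binExps_pairwise_gt N) k (k + 1) (by omega) h' k.lt_succ_self
      have hpow : (2 : ℝ) * 2 ^ (binExps N)[k + 1] ≤ 2 ^ (binExps N)[k] := by
        rw [← pow_succ']
        exact pow_le_pow_right₀ one_le_two hlt
      rw [eta_of_lt h, eta_of_lt (by omega), ← mul_div_assoc]
      exact div_le_div_of_nonneg_right hpow (Nat.cast_nonneg N)
    · rw [eta_of_le h, mul_zero]
      exact eta_nonneg N k

namespace IsHalving

variable {θ : ℕ → ℝ} (hθ : IsHalving θ)
include hθ

lemma le_mul_half_pow (k j : ℕ) : θ (k + j) ≤ θ k * (1 / 2) ^ j := by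
  induction j with
  | zero => simp
  | succ j ih =>
    have := hθ.two_mul_succ_le (k + j)
    rw [← add_assoc, pow_succ]
    linarith

lemma le_half_pow (k : ℕ) : θ k ≤ (1 / 2) ^ k := by
  have := hθ.le_mul_half_pow 0 k
  rw [zero_add] at this
  exact this.trans (mul_le_of_le_one_left (by positivity) hθ.zero_le_one)

lemma le_one (k : ℕ) : θ k ≤ 1 :=
  (hθ.le_half_pow k).trans (pow_le_one₀ (by norm_num) (by norm_num))

lemma tsum_tail_le (k : ℕ) : ∑' j, θ (k + 1 + j) ≤ θ k := by
  have hbound (j : ℕ) : θ (k + 1 + j) ≤ θ k / 2 * (1 / 2) ^ j := by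
    rw [add_right_comm, add_assoc]
    exact (hθ.le_mul_half_pow k (j + 1)).trans_eq (by ring)
  have hsum : Summable fun j => θ k / 2 * (1 / 2 : ℝ) ^ j := summable_geometric_two.mul_left _
  calc ∑' j, θ (k + 1 + j) ≤ ∑' j, θ k / 2 * (1 / 2) ^ j :=
        Summable.tsum_le_tsum hbound
          (Summable.of_nonneg_of_le (fun j => hθ.nonneg _) hbound hsum) hsum
    _ = θ k := by rw [tsum_mul_left, tsum_geometric_two, div_mul_cancel₀ _ two_ne_zero]

lemma rpow_le_rpow_half_pow {a : ℝ} (ha : 0 ≤ a) (n : ℕ) :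
    θ n ^ a ≤ ((1 / 2) ^ a) ^ n := by
  rw [Real.rpow_pow_comm (by norm_num)]
  exact Real.rpow_le_rpow (hθ.nonneg n) (hθ.le_half_pow n) ha

lemma rpow_mul_tsum_tail_le {s : ℝ} (hs : s + 1 ≠ 0) (k : ℕ) :
    θ k ^ s * ∑' j, θ (k + 1 + j) ≤ θ k ^ (s + 1) := by
  rw [Real.rpow_add_one' (hθ.nonneg k) hs]
  exact mul_le_mul_of_nonneg_left (hθ.tsum_tail_le k) (Real.rpow_nonneg (hθ.nonneg k) s)

end IsHalving

lemma abs_mul_log_le_two_mul_rpow_half {x : ℝ} (hx₀ : 0 ≤ x) (hx₁ : x ≤ 1) :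
    |x * Real.log x| ≤ 2 * x ^ (1 / 2 : ℝ) := by
  rcases hx₀.eq_or_lt with rfl | hx
  · simp
  have hsplit : x * Real.log x = x ^ (1 / 2 : ℝ) * (Real.log x * x ^ (1 / 2 : ℝ)) := by
    rw [mul_left_comm, ← Real.rpow_add hx]
    norm_num [mul_comm]
  have hlt := Real.abs_log_mul_self_rpow_lt x (1 / 2) hx hx₁ (by norm_num)
  rw [hsplit, abs_mul, abs_of_nonneg (Real.rpow_nonneg hx₀ _), mul_comm 2]
  exact mul_le_mul_of_nonneg_left (by linarith) (Real.rpow_nonneg hx₀ _)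

lemma abs_mul_log_le_one {x : ℝ} (hx₀ : 0 ≤ x) (hx₁ : x ≤ 1) :
    |x * Real.log x| ≤ 1 := by
  rw [mul_comm]
  rcases hx₀.eq_or_lt with rfl | hx
  · simp
  · exact (Real.abs_log_mul_self_lt x hx hx₁).le

lemma sq_mul_log_div_four (x : ℝ) :
    x ^ 2 * Real.log (x / 4) = x * (x * Real.log x) - Real.log 4 * x ^ 2 := by
  rcases eq_or_ne x 0 with rfl | hx
  · simp
  · rw [Real.log_div hx (by norm_num)]; ring

lemma abs_sq_mul_log_div_four_le {x : ℝ} (hx₀ : 0 ≤ x) (hx₁ : x ≤ 1) :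
    |x ^ 2 * Real.log (x / 4)| ≤ (1 + Real.log 4) * x ^ (1 : ℝ) := by
  have hlog4 : 0 ≤ Real.log 4 := Real.log_nonneg (by norm_num)
  have hxlogx := abs_mul_log_le_one hx₀ hx₁
  rw [sq_mul_log_div_four, Real.rpow_one]
  calc |x * (x * Real.log x) - Real.log 4 * x ^ 2|
      ≤ x * |x * Real.log x| + Real.log 4 * x ^ 2 := by
        refine (abs_sub _ _).trans_eq ?_
        rw [abs_mul x, abs_of_nonneg hx₀, abs_of_nonneg (mul_nonneg hlog4 (sq_nonneg x))]
    _ ≤ x * 1 + Real.log 4 * x := by gcongr; nlinarith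
    _ = (1 + Real.log 4) * x := by ring

section Continuity

variable (ϑ : ℕ → ℝ)

/-- On halving sequences `θ n ≤ 2⁻ⁿ`, so `|g x| ≤ C x ^ a` gives the summable majorant
`C (2 ^ (-a)) ^ n` needed for dominated convergence. -/
lemma continuousWithinAt_tsum_comp {g : ℝ → ℝ} (hg : Continuous g) {a C : ℝ} (ha : 0 < a)
    (hgC : ∀ x, 0 ≤ x → x ≤ 1 → |g x| ≤ C * x ^ a) :
    ContinuousWithinAt (fun θ => ∑' n, g (θ n)) {θ | IsHalving θ} ϑ := by
  have hC : 0 ≤ C := by simpa using (abs_nonneg _).trans (hgC 1 zero_le_one le_rfl)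
  refine tendsto_tsum_of_dominated_convergence (bound := fun n => C * ((1 / 2) ^ a) ^ n)
    ((summable_geometric_of_lt_one (by positivity)
      (Real.rpow_lt_one (by norm_num) (by norm_num) ha)).mul_left C)
    (fun n => (hg.comp (continuous_apply n)).continuousWithinAt)
    (eventually_nhdsWithin_of_forall fun θ hθ n => ?_)
  exact (hgC _ (hθ.nonneg n) (hθ.le_one n)).trans
    (mul_le_mul_of_nonneg_left (hθ.rpow_le_rpow_half_pow ha.le n) hC)

lemma continuousWithinAt_tsum_tail (k : ℕ) :
    ContinuousWithinAt (fun θ => ∑' j, θ (k + 1 + j)) {θ | IsHalving θ} ϑ := by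
  refine tendsto_tsum_of_dominated_convergence
    (bound := fun j => (1 / 2) ^ (k + 1) * (1 / 2) ^ j)
    (summable_geometric_two.mul_left _) (fun j => (continuous_apply _).continuousWithinAt)
    (eventually_nhdsWithin_of_forall fun θ hθ j => ?_)
  rw [Real.norm_eq_abs, abs_of_nonneg (hθ.nonneg _), ← pow_add]
  exact hθ.le_half_pow _

lemma continuousWithinAt_rpow_mul_tsum_tail {s : ℝ} (hs : -1 < s) (n : ℕ) :
    ContinuousWithinAt (fun θ => θ n ^ s * ∑' j, θ (n + 1 + j)) {θ | IsHalving θ} ϑ := by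
  have htail := continuousWithinAt_tsum_tail ϑ n
  rcases eq_or_ne s 0 with rfl | hs₀
  · simpa only [Real.rpow_zero, one_mul] using htail
  rcases eq_or_ne (ϑ n) 0 with h₀ | h₀
  · -- at a zero coordinate `x ^ s` may blow up, but the term is squeezed by `x ^ (s + 1) → 0`
    have hs₁ : s + 1 ≠ 0 := by linarith
    have hpow :
        Tendsto (fun θ : ℕ → ℝ => θ n ^ (s + 1)) (𝓝[{θ | IsHalving θ}] ϑ) (𝓝 0) := by
      have := ((Real.continuous_rpow_const (q := s + 1) (by linarith)).comp
        (continuous_apply n)).continuousWithinAt (s := {θ | IsHalving θ}) (x := ϑ)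
      rwa [ContinuousWithinAt, Function.comp_apply, h₀, Real.zero_rpow hs₁] at this
    rw [ContinuousWithinAt, h₀, Real.zero_rpow hs₀, zero_mul]
    exact squeeze_zero'
      (eventually_nhdsWithin_of_forall fun θ hθ =>
        mul_nonneg (Real.rpow_nonneg (hθ.nonneg n) s) (tsum_nonneg fun j => hθ.nonneg _))
      (eventually_nhdsWithin_of_forall fun θ hθ => hθ.rpow_mul_tsum_tail_le hs₁ n) hpow
  · exact ((Real.continuousAt_rpow_const _ s (Or.inl h₀)).comp_continuousWithinAt (x := ϑ)
      (continuous_apply n).continuousWithinAt).mul htail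

lemma continuousWithinAt_tsum_rpow_mul_tail {s : ℝ} (hs : -1 < s) :
    ContinuousWithinAt (fun θ => ∑' n, θ n ^ s * ∑' j, θ (n + 1 + j))
      {θ | IsHalving θ} ϑ := by
  have hs₁ : s + 1 ≠ 0 := by linarith
  refine tendsto_tsum_of_dominated_convergence (bound := fun n => ((1 / 2) ^ (s + 1)) ^ n)
    (summable_geometric_of_lt_one (by positivity)
      (Real.rpow_lt_one (by norm_num) (by norm_num) (by linarith)))
    (continuousWithinAt_rpow_mul_tsum_tail ϑ hs)
    (eventually_nhdsWithin_of_forall fun θ hθ n => ?_)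
  rw [Real.norm_eq_abs, abs_of_nonneg (mul_nonneg (Real.rpow_nonneg (hθ.nonneg n) s)
    (tsum_nonneg fun j => hθ.nonneg _))]
  exact (hθ.rpow_mul_tsum_tail_le hs₁ n).trans (hθ.rpow_le_rpow_half_pow (by linarith) n)

lemma continuousWithinAt_Hinf {s : ℝ} (hs : -1 < s) :
    ContinuousWithinAt (fun θ => Hinf θ s) {θ | IsHalving θ} ϑ := by
  have hsum := continuousWithinAt_tsum_comp ϑ (Real.continuous_rpow_const (q := s + 1)
    (by linarith)) (a := s + 1) (C := 1) (by linarith)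
    fun x hx _ => by rw [abs_of_nonneg (Real.rpow_nonneg hx _), one_mul]
  exact hsum.add (continuousWithinAt_const.mul (continuousWithinAt_tsum_rpow_mul_tail ϑ hs))

lemma continuousWithinAt_Kinf : ContinuousWithinAt Kinf {θ | IsHalving θ} ϑ := by
  have hcont : Continuous fun x : ℝ => x ^ 2 * Real.log (x / 4) := by
    simp only [sq_mul_log_div_four]
    fun_prop
  have hsum := continuousWithinAt_tsum_comp ϑ hcont one_pos
    fun x hx₀ hx₁ => abs_sq_mul_log_div_four_le hx₀ hx₁
  have htail : ContinuousWithinAt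
      (fun θ => ∑' n, (∑' j, θ (n + 1 + j)) * (θ n * Real.log (θ n)))
      {θ | IsHalving θ} ϑ := by
    refine tendsto_tsum_of_dominated_convergence (bound := fun n => (1 / 2) ^ n)
      summable_geometric_two
      (fun n => (continuousWithinAt_tsum_tail ϑ n).mul
        (Real.continuous_mul_log.comp (continuous_apply n)).continuousWithinAt)
      (eventually_nhdsWithin_of_forall fun θ hθ n => ?_)
    rw [Real.norm_eq_abs, abs_mul, abs_of_nonneg (tsum_nonneg fun j => hθ.nonneg _)]
    calc (∑' j, θ (n + 1 + j)) * |θ n * Real.log (θ n)| ≤ (1 / 2) ^ n * 1 :=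
          mul_le_mul ((hθ.tsum_tail_le n).trans (hθ.le_half_pow n))
            (abs_mul_log_le_one (hθ.nonneg n) (hθ.le_one n)) (abs_nonneg _) (by positivity)
      _ = (1 / 2) ^ n := mul_one _
  exact (continuousWithinAt_const.add hsum).add (continuousWithinAt_const.mul htail)

lemma continuousWithinAt_Rinf : ContinuousWithinAt Rinf {θ | IsHalving θ} ϑ := by
  have hweighted :
      ContinuousWithinAt (fun θ => ∑' n : ℕ, (n : ℝ) * θ n) {θ | IsHalving θ} ϑ := by
    refine tendsto_tsum_of_dominated_convergence (bound := fun n => (n : ℝ) * (1 / 2) ^ n)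
      (by simpa using
        summable_pow_mul_geometric_of_norm_lt_one 1 (r := (1 / 2 : ℝ)) (by norm_num))
      (fun n => continuousWithinAt_const.mul (continuous_apply n).continuousWithinAt)
      (eventually_nhdsWithin_of_forall fun θ hθ n => ?_)
    rw [Real.norm_eq_abs, abs_mul, Nat.abs_cast, abs_of_nonneg (hθ.nonneg n)]
    exact mul_le_mul_of_nonneg_left (hθ.le_half_pow n) n.cast_nonneg
  have hentropy := continuousWithinAt_tsum_comp ϑ Real.continuous_mul_log
    (by norm_num : (0 : ℝ) < 1 / 2) fun _ hx₀ hx₁ => abs_mul_log_le_two_mul_rpow_half hx₀ hx₁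
  exact (continuousWithinAt_const.mul hweighted).sub hentropy

end Continuity

lemma tsum_eta_tail (N k : ℕ) :
    ∑' j, eta N (k + 1 + j) = ∑ j ∈ Finset.Ico (k + 1) (pbin N), eta N j := by
  rw [Finset.sum_Ico_eq_sum_range, tsum_eq_sum (s := Finset.range (pbin N - (k + 1)))]
  intro j hj
  rw [Finset.mem_range, not_lt] at hj
  exact eta_of_le (by omega)

lemma tsum_eta_eq_sum {g : ℝ → ℝ} (hg : g 0 = 0) (N : ℕ) :
    ∑' n, g (eta N n) = ∑ n ∈ Finset.range (pbin N), g (eta N n) :=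
  tsum_eq_sum fun n hn => by rw [eta_of_le (by simpa using hn), hg]

lemma Hinf_eta (N : ℕ) {s : ℝ} (hs : -1 < s) : Hinf (eta N) s = Heta N s := by
  have hs₁ : s + 1 ≠ 0 := by linarith
  rw [Hinf, Heta, Hvec]
  congr 1
  · exact tsum_eta_eq_sum (g := (· ^ (s + 1))) (Real.zero_rpow hs₁) N
  congr 1
  rw [tsum_eq_sum (s := Finset.range (pbin N))]
  · simp only [tsum_eta_tail]
  · intro n hn
    rw [Finset.mem_range, not_lt] at hn
    rw [tsum_eta_tail, Finset.Ico_eq_empty (by omega), Finset.sum_empty, mul_zero]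

lemma Kinf_eta (N : ℕ) : Kinf (eta N) = Keta N := by
  rw [Kinf, Keta, Kvec]
  congr 2
  · exact tsum_eta_eq_sum (g := fun x => x ^ 2 * Real.log (x / 4)) (by simp) N
  rw [tsum_eq_sum (s := Finset.range (pbin N))]
  · simp only [tsum_eta_tail]
  · intro n hn
    rw [eta_of_le (by simpa using hn)]
    simp

lemma Rinf_eta (N : ℕ) : Rinf (eta N) = Reta N := by
  rw [Rinf, Reta, Rvec]
  congr 1
  · congr 1
    exact tsum_eq_sum fun n hn => by rw [eta_of_le (by simpa using hn), mul_zero]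
  · exact tsum_eta_eq_sum (g := fun x => x * Real.log x) (by simp) N

lemma tendsto_comp_eta {F : (ℕ → ℝ) → ℝ}
    (hF : ∀ ϑ, ContinuousWithinAt F {θ | IsHalving θ} ϑ) {Nm : ℕ → ℕ} {ϑ : ℕ → ℝ}
    (hconv : ∀ k, Tendsto (fun m => eta (Nm m) k) atTop (𝓝 (ϑ k))) :
    Tendsto (fun m => F (eta (Nm m))) atTop (𝓝 (F ϑ)) :=
  (hF ϑ).tendsto.comp <| tendsto_nhdsWithin_iff.2
    ⟨tendsto_pi_nhds.2 hconv, Eventually.of_forall fun _ => isHalving_eta _⟩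

lemma exists_subseq_tendsto_eta (M : ℕ → ℕ) :
    ∃ ψ : ℕ → ℕ, StrictMono ψ ∧ ∃ ϑ : ℕ → ℝ,
      ∀ k, Tendsto (fun m => eta (M (ψ m)) k) atTop (𝓝 (ϑ k)) := by
  have hcube : IsCompact (Set.univ.pi fun _ : ℕ => Set.Icc (0 : ℝ) 1) :=
    isCompact_univ_pi fun _ => isCompact_Icc
  have hmem (m : ℕ) : eta (M m) ∈ Set.univ.pi fun _ : ℕ => Set.Icc (0 : ℝ) 1 :=
    Set.mem_univ_pi.2 fun k => ⟨eta_nonneg _ k, (isHalving_eta _).le_one k⟩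
  obtain ⟨ϑ, -, ψ, hψ, hlim⟩ := hcube.tendsto_subseq hmem
  exact ⟨ψ, hψ, ϑ, tendsto_pi_nhds.1 hlim⟩

lemma image_Sset_eq_limitPoints {F : (ℕ → ℝ) → ℝ}
    (hF : ∀ ϑ, ContinuousWithinAt F {θ | IsHalving θ} ϑ) {Fη : ℕ → ℝ}
    (hFη : ∀ N, F (eta N) = Fη N) :
    {x | ∃ ϑ ∈ Sset, F ϑ = x} = limitPoints (fun N => Fη (N + 1)) := by
  ext L
  constructor
  · rintro ⟨ϑ, ⟨Nm, hmono, hpos, hconv⟩, rfl⟩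
    refine ⟨fun m => Nm m - 1, fun a b hab => ?_, ?_⟩
    · have := hmono hab
      have := hpos a
      dsimp only
      omega
    · refine (tendsto_comp_eta hF hconv).congr fun m => ?_
      rw [hFη]
      dsimp only
      rw [Nat.sub_add_cancel (hpos m)]
  · rintro ⟨φ, hφ, hL⟩
    obtain ⟨ψ, hψ, ϑ, hconv⟩ := exists_subseq_tendsto_eta fun m => φ m + 1
    refine ⟨ϑ, ⟨fun m => φ (ψ m) + 1, fun a b hab => Nat.succ_lt_succ (hφ (hψ hab)),
      fun _ => Nat.le_add_left 1 _, hconv⟩, ?_⟩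
    · have hlim : Tendsto (fun m => Fη (φ (ψ m) + 1)) atTop (𝓝 (F ϑ)) := by
        simpa only [hFη] using tendsto_comp_eta hF hconv
      exact tendsto_nhds_unique hlim (hL.comp hψ.tendsto_atTop)

theorem stmt6 (s : ℝ) (hs : -1 < s) :
    {x : ℝ | ∃ ϑ ∈ Sset, Hinf ϑ s = x} = limitPoints (fun N => Heta (N + 1) s) ∧
    {x : ℝ | ∃ ϑ ∈ Sset, Kinf ϑ = x} = limitPoints (fun N => Keta (N + 1)) ∧
    {x : ℝ | ∃ ϑ ∈ Sset, Rinf ϑ = x} = limitPoints (fun N => Reta (N + 1)) :=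
  ⟨image_Sset_eq_limitPoints (continuousWithinAt_Hinf · hs) (Hinf_eta · hs),
    image_Sset_eq_limitPoints continuousWithinAt_Kinf Kinf_eta,
    image_Sset_eq_limitPoints continuousWithinAt_Rinf Rinf_eta⟩

end GreedyEnergy
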